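/- arXiv:0711.0499 — 4 statements merged into one kernel-verified Lean document; each statement's English description precedes it below -/
import Mathlib

section
/- Let x = (a,b,c,d) ∈ ℤ⁴ and P(x) = b²c² + 18abcd − 4ac³ − 4b³d − 27a²d². Then P(x) ≡ 1 (mod 8) if and only if either (a and d are even and b and c are odd) or (a and d are odd and b + c is odd). -/
/-!
The discriminant modulo 8 only depends on the residues of the coefficients modulo 8, so the
equivalence is a finite check over `(ZMod 8)⁴`; the parity conditions are read off through the
reduction `ZMod 8 → ZMod 2`.
-/

/-- Discriminant of an integral binary cubic form with coefficients `(a, b, c, d)`. -/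
def discZ (a b c d : ℤ) : ℤ :=
  b ^ 2 * c ^ 2 + 18 * a * b * c * d - 4 * a * c ^ 3 - 4 * b ^ 3 * d - 27 * a ^ 2 * d ^ 2

def cubicDisc {R : Type*} [CommRing R] (a b c d : R) : R :=
  b ^ 2 * c ^ 2 + 18 * a * b * c * d - 4 * a * c ^ 3 - 4 * b ^ 3 * d - 27 * a ^ 2 * d ^ 2

theorem Int.cast_discZ {R : Type*} [CommRing R] (a b c d : ℤ) :
    ((discZ a b c d : ℤ) : R) = cubicDisc (a : R) b c d := by
  unfold discZ cubicDisc
  push_cast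
  ring

abbrev zmod8ToZMod2 : ZMod 8 →+* ZMod 2 := ZMod.castHom (by norm_num) (ZMod 2)

theorem cubicDisc_zmod8_eq_one_iff (a b c d : ZMod 8) :
    cubicDisc a b c d = 1 ↔
      (zmod8ToZMod2 a = 0 ∧ zmod8ToZMod2 d = 0 ∧ zmod8ToZMod2 b = 1 ∧ zmod8ToZMod2 c = 1) ∨
        (zmod8ToZMod2 a = 1 ∧ zmod8ToZMod2 d = 1 ∧ zmod8ToZMod2 (b + c) = 1) := by
  revert a b c d
  decide

theorem stmt1 (a b c d : ℤ) :
    discZ a b c d ≡ 1 [ZMOD 8] ↔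
      (Even a ∧ Even d ∧ Odd b ∧ Odd c) ∨ (Odd a ∧ Odd d ∧ Odd (b + c)) := by
  rw [← Nat.cast_ofNat, ← ZMod.intCast_eq_intCast_iff, Int.cast_one, Int.cast_discZ,
    cubicDisc_zmod8_eq_one_iff, ← Int.cast_add]
  simp only [map_intCast, ZMod.intCast_eq_zero_iff_even, ZMod.intCast_eq_one_iff_odd]
end

section
/- Let x = (a,b,c,d) ∈ ℤ⁴ and P(x) = b²c² + 18abcd − 4ac³ − 4b³d − 27a²d². Then P(x) ≡ 5 (mod 8) if and only if either (b and c are even and a and d are odd) or (b and c are odd and a + d is odd). -/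
private lemma h28 : (2 : ℕ) ∣ 8 := by norm_num

private lemma key : ∀ A B C D : ZMod 8,
    B ^ 2 * C ^ 2 + 18 * A * B * C * D - 4 * A * C ^ 3 - 4 * B ^ 3 * D - 27 * A ^ 2 * D ^ 2 = 5 ↔
      ((ZMod.castHom h28 (ZMod 2)) B = 0 ∧ (ZMod.castHom h28 (ZMod 2)) C = 0 ∧
        (ZMod.castHom h28 (ZMod 2)) A = 1 ∧ (ZMod.castHom h28 (ZMod 2)) D = 1) ∨
      ((ZMod.castHom h28 (ZMod 2)) B = 1 ∧ (ZMod.castHom h28 (ZMod 2)) C = 1 ∧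
        (ZMod.castHom h28 (ZMod 2)) A + (ZMod.castHom h28 (ZMod 2)) D = 1) := by
  decide

private lemma even_iff_cast (x : ℤ) : Even x ↔ (x : ZMod 2) = 0 := by
  rw [even_iff_two_dvd, show (2:ℤ) = ((2:ℕ):ℤ) by norm_num,
    ← ZMod.intCast_zmod_eq_zero_iff_dvd]

private lemma odd_iff_cast (x : ℤ) : Odd x ↔ (x : ZMod 2) = 1 := by
  rw [Int.odd_iff, show (1 : ZMod 2) = ((1 : ℤ) : ZMod 2) by norm_num,
    ZMod.intCast_eq_intCast_iff, Int.ModEq]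
  norm_num

theorem stmt2 (a b c d : ℤ) :
    discZ a b c d ≡ 5 [ZMOD 8] ↔
      (Even b ∧ Even c ∧ Odd a ∧ Odd d) ∨ (Odd b ∧ Odd c ∧ Odd (a + d)) := by
  have h := key (a : ZMod 8) (b : ZMod 8) (c : ZMod 8) (d : ZMod 8)
  have hcast : discZ a b c d ≡ 5 [ZMOD 8] ↔ ((discZ a b c d : ZMod 8) = 5) :=
    (ZMod.intCast_eq_intCast_iff _ _ _).symm.trans (by norm_num)
  rw [hcast]
  simp only [discZ, Int.cast_sub, Int.cast_add, Int.cast_mul, Int.cast_pow, Int.cast_ofNat] at *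
  rw [h]
  simp only [even_iff_cast, odd_iff_cast, map_intCast, Int.cast_add]
end

section
/- The lattice L₇ = {(a,b,c,d) ∈ ℤ⁴ : 2 ∣ (a+b+c), 2 ∣ (b+c+d)} is invariant under the action of SL₂(ℤ) on binary cubic forms given by (g·x)(u,v) = x(pu+rv, qu+sv) for g = (p q; r s) with det g = 1, where x(u,v) = a·u³ + b·u²v + c·uv² + d·v³. -/
def L₇ : Set (ℤ × ℤ × ℤ × ℤ) :=
  {x | 2 ∣ (x.1 + x.2.1 + x.2.2.1) ∧ 2 ∣ (x.2.1 + x.2.2.1 + x.2.2.2)}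

lemma key7 : ∀ a b c d p q r s : ZMod 2, a + b + c = 0 → b + c + d = 0 →
    p * s - q * r = 1 →
    (a * (p + r) ^ 3 + b * (p + r) ^ 2 * (q + s) + c * (p + r) * (q + s) ^ 2
        + d * (q + s) ^ 3)
      - (a * r ^ 3 + b * r ^ 2 * s + c * r * s ^ 2 + d * s ^ 3) = 0 ∧
    (a * (p + r) ^ 3 + b * (p + r) ^ 2 * (q + s) + c * (p + r) * (q + s) ^ 2
        + d * (q + s) ^ 3)
      - (a * p ^ 3 + b * p ^ 2 * q + c * p * q ^ 2 + d * q ^ 3) = 0 := by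
  decide

/-- The lattice `L₇` is invariant under the action of `SL₂(ℤ)` by linear change of
variables: if `(a', b', c', d')` is the coefficient vector of
`x(pu + rv, qu + sv)` where `ps - qr = 1`, and `(a, b, c, d) ∈ L₇`,
then `(a', b', c', d') ∈ L₇`. -/
theorem stmt11 (p q r s a b c d a' b' c' d' : ℤ) (hdet : p * s - q * r = 1)
    (haction : ∀ u v : ℤ,
      a' * u ^ 3 + b' * u ^ 2 * v + c' * u * v ^ 2 + d' * v ^ 3 =
        a * (p * u + r * v) ^ 3 + b * (p * u + r * v) ^ 2 * (q * u + s * v)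
          + c * (p * u + r * v) * (q * u + s * v) ^ 2 + d * (q * u + s * v) ^ 3)
    (hx : (a, b, c, d) ∈ L₇) : (a', b', c', d') ∈ L₇ := by
  obtain ⟨h1, h2⟩ := hx
  have e1 : a' + b' + c' =
      (a * (p + r) ^ 3 + b * (p + r) ^ 2 * (q + s) + c * (p + r) * (q + s) ^ 2
        + d * (q + s) ^ 3)
      - (a * r ^ 3 + b * r ^ 2 * s + c * r * s ^ 2 + d * s ^ 3) := by
    linear_combination haction 1 1 - haction 0 1
  have e2 : b' + c' + d' =
      (a * (p + r) ^ 3 + b * (p + r) ^ 2 * (q + s) + c * (p + r) * (q + s) ^ 2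
        + d * (q + s) ^ 3)
      - (a * p ^ 3 + b * p ^ 2 * q + c * p * q ^ 2 + d * q ^ 3) := by
    linear_combination haction 1 1 - haction 1 0
  have ha : ((a : ZMod 2) + b + c = 0) := by
    have := (ZMod.intCast_zmod_eq_zero_iff_dvd (a + b + c) 2).mpr h1
    push_cast at this; exact this
  have hb : ((b : ZMod 2) + c + d = 0) := by
    have := (ZMod.intCast_zmod_eq_zero_iff_dvd (b + c + d) 2).mpr h2
    push_cast at this; exact this
  have hd : ((p : ZMod 2) * s - q * r = 1) := by
    have : ((p * s - q * r : ℤ) : ZMod 2) = ((1 : ℤ) : ZMod 2) := by rw [hdet]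
    push_cast at this; exact this
  obtain ⟨k1, k2⟩ := key7 a b c d p q r s ha hb hd
  constructor
  · have h : ((a' + b' + c' : ℤ) : ZMod 2) = 0 := by rw [e1]; push_cast; exact k1
    exact_mod_cast (ZMod.intCast_zmod_eq_zero_iff_dvd _ 2).mp h
  · have h : ((b' + c' + d' : ℤ) : ZMod 2) = 0 := by rw [e2]; push_cast; exact k2
    exact_mod_cast (ZMod.intCast_zmod_eq_zero_iff_dvd _ 2).mp h
end

section
/- The lattice L₂ = {(a,b,c,d) ∈ ℤ⁴ : 3 ∣ b, 3 ∣ c} is invariant under the action of SL₂(ℤ) on binary cubic forms given by (g·x)(u,v) = x(pu+rv, qu+sv), where x(u,v) = a·u³ + b·u²v + c·uv² + d·v³. -/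
def L₂ : Set (ℤ × ℤ × ℤ × ℤ) := {x | 3 ∣ x.2.1 ∧ 3 ∣ x.2.2.1}

/-- The lattice `L₂` is invariant under the action of `SL₂(ℤ)` by linear change of
variables: if `(a', b', c', d')` is the coefficient vector of
`x(pu + rv, qu + sv)` where `ps - qr = 1`, and `(a, b, c, d) ∈ L₂`,
then `(a', b', c', d') ∈ L₂`. -/
theorem stmt12 (p q r s a b c d a' b' c' d' : ℤ) (hdet : p * s - q * r = 1)
    (haction : ∀ u v : ℤ,
      a' * u ^ 3 + b' * u ^ 2 * v + c' * u * v ^ 2 + d' * v ^ 3 =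
        a * (p * u + r * v) ^ 3 + b * (p * u + r * v) ^ 2 * (q * u + s * v)
          + c * (p * u + r * v) * (q * u + s * v) ^ 2 + d * (q * u + s * v) ^ 3)
    (hx : (a, b, c, d) ∈ L₂) : (a', b', c', d') ∈ L₂ := by
  obtain ⟨⟨k, hk⟩, ⟨l, hl⟩⟩ := hx
  have h10 := haction 1 0
  have h01 := haction 0 1
  have h11 := haction 1 1
  have h1m1 := haction 1 (-1)
  have hb : 2 * b' = 3 * (2 * a * p ^ 2 * r + 2 * k * (p ^ 2 * s + 2 * p * q * r)
      + 2 * l * (q ^ 2 * r + 2 * p * q * s) + 2 * d * q ^ 2 * s) := by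
    linear_combination h11 - h1m1 - 2 * h01 + (2 * p ^ 2 * s + 4 * p * q * r) * hk
      + (2 * q ^ 2 * r + 4 * p * q * s) * hl
  have hc : 2 * c' = 3 * (2 * a * p * r ^ 2 + 2 * k * (2 * p * r * s + q * r ^ 2)
      + 2 * l * (p * s ^ 2 + 2 * q * r * s) + 2 * d * q * s ^ 2) := by
    linear_combination h11 + h1m1 - 2 * h10 + (4 * p * r * s + 2 * q * r ^ 2) * hk
      + (2 * p * s ^ 2 + 4 * q * r * s) * hl
  constructor <;> simp only [] <;> omega
end
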